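/- If a, b ∈ (0,1), a > b and a + b > 1, then π₉^A > π₉^B. -/
import Mathlib


noncomputable section

/-- Probability that the set ends 6-0 for the player serving first. -/
def S60 (x1 y2 : ℝ) : ℝ := (x1*y2)^3
def S61 (x1 x2 y1 y2 : ℝ) : ℝ := 3*x1^3*x2*y2^3 + 3*x1^4*y1*y2^2
def S62 (x1 x2 y1 y2 : ℝ) : ℝ :=
  12*x1^3*x2*y1*y2^3 + 6*x1^2*x2^2*y2^4 + 3*x1^4*y1^2*y2^2
def S63 (x1 x2 y1 y2 : ℝ) : ℝ :=
  24*x1^3*x2^2*y1*y2^3 + 24*x1^4*x2*y1^2*y2^2 + 4*x1^2*x2^3*y2^4 + 4*x1^5*y1^3*y2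
def S64 (x1 x2 y1 y2 : ℝ) : ℝ :=
  60*x1^3*x2^2*y1^2*y2^3 + 40*x1^2*x2^3*y1*y2^4 + 20*x1^4*x2*y1^3*y2^2
    + 5*x1*x2^4*y2^5 + x1^5*y1^4*y2
def S75 (x1 x2 y1 y2 : ℝ) : ℝ :=
  100*x1^3*x2^3*y1^2*y2^4 + 100*x1^4*x2^2*y1^3*y2^3 + 25*x1^2*x2^4*y1*y2^5
    + 25*x1^5*x2*y1^4*y2^2 + x1*x2^5*y2^6 + x1^6*y1^5*y2

/- Set-score probabilities when A serves first, as functions of the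
   game-winning-on-serve probabilities a (for A) and b (for B). -/
def SA60 (a b : ℝ) : ℝ := S60 a (1-b)
def SA06 (a b : ℝ) : ℝ := ((1-a)*b)^3
def SA61 (a b : ℝ) : ℝ := S61 a (1-a) b (1-b)
def SA16 (a b : ℝ) : ℝ := S61 (1-a) a (1-b) b
def SA62 (a b : ℝ) : ℝ := S62 a (1-a) b (1-b)
def SA26 (a b : ℝ) : ℝ := S62 (1-a) a (1-b) b
def SA63 (a b : ℝ) : ℝ := S63 a (1-a) b (1-b)
def SA36 (a b : ℝ) : ℝ := S63 (1-a) a (1-b) b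
def SA64 (a b : ℝ) : ℝ := S64 a (1-a) b (1-b)
def SA46 (a b : ℝ) : ℝ := S64 (1-a) a (1-b) b
def SA75 (a b : ℝ) : ℝ := S75 a (1-a) b (1-b)
def SA57 (a b : ℝ) : ℝ := S75 (1-a) a (1-b) b
def SA66 (a b : ℝ) : ℝ :=
  1 - (SA60 a b + SA06 a b + SA61 a b + SA16 a b + SA62 a b + SA26 a b
        + SA63 a b + SA36 a b + SA64 a b + SA46 a b)
    - SA75 a b - SA57 a b

/- Probabilities that a set with first server A (resp. B) ends after exactly
   k games.  When B serves first the roles of a and b are interchanged. -/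
def pi6A (a b : ℝ) : ℝ := SA60 a b + SA06 a b
def pi7A (a b : ℝ) : ℝ := SA61 a b + SA16 a b
def pi8A (a b : ℝ) : ℝ := SA62 a b + SA26 a b
def pi9A (a b : ℝ) : ℝ := SA63 a b + SA36 a b
def pi10A (a b : ℝ) : ℝ := SA64 a b + SA46 a b
def pi12A (a b : ℝ) : ℝ := SA75 a b + SA57 a b
def pi13A (a b : ℝ) : ℝ := SA66 a b

def pi6B (a b : ℝ) : ℝ := pi6A b a
def pi7B (a b : ℝ) : ℝ := pi7A b a
def pi8B (a b : ℝ) : ℝ := pi8A b a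
def pi9B (a b : ℝ) : ℝ := pi9A b a
def pi10B (a b : ℝ) : ℝ := pi10A b a
def pi12B (a b : ℝ) : ℝ := pi12A b a
def pi13B (a b : ℝ) : ℝ := pi13A b a

theorem pi9_gt (a b : ℝ) (ha : a ∈ Set.Ioo (0:ℝ) 1) (hb : b ∈ Set.Ioo (0:ℝ) 1)
    (hab : a > b) (hsum : a + b > 1) : pi9A a b > pi9B a b := by
  obtain ⟨ha0, ha1⟩ := ha
  obtain ⟨hb0, hb1⟩ := hb
  have h1a : (0:ℝ) < 1 - a := by linarith
  have h1b : (0:ℝ) < 1 - b := by linarith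
  have key : pi9A a b - pi9B a b
      = (a - b) * ((a + b - 1) *
        (4*(1-a)^3*(1-b)^3 + 24*a*(1-a)^2*(1-b)^2*b
          + 24*a^2*(1-a)*(1-b)*b^2 + 4*a^3*b^3)) := by
    simp only [pi9A, pi9B, SA63, SA36, S63]
    ring
  have t1 : (0:ℝ) < (1-a)^3*(1-b)^3 :=
    mul_pos (pow_pos h1a 3) (pow_pos h1b 3)
  have t2 : (0:ℝ) < a*(1-a)^2*(1-b)^2*b :=
    mul_pos (mul_pos (mul_pos ha0 (pow_pos h1a 2)) (pow_pos h1b 2)) hb0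
  have t3 : (0:ℝ) < a^2*(1-a)*(1-b)*b^2 :=
    mul_pos (mul_pos (mul_pos (pow_pos ha0 2) h1a) h1b) (pow_pos hb0 2)
  have t4 : (0:ℝ) < a^3*b^3 := mul_pos (pow_pos ha0 3) (pow_pos hb0 3)
  have hQ : (0:ℝ) < 4*(1-a)^3*(1-b)^3 + 24*a*(1-a)^2*(1-b)^2*b
      + 24*a^2*(1-a)*(1-b)*b^2 + 4*a^3*b^3 := by nlinarith
  have hprod : (0:ℝ) < (a - b) * ((a + b - 1) * _) :=
    mul_pos (by linarith) (mul_pos (by linarith) hQ)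
  linarith [key, hprod]
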